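/- arXiv:1610.09744 — 6 statements merged into one kernel-verified Lean document; each statement's English description precedes it below -/
import Mathlib

section
/- Let (A, B, i, p) be a split pair of Hopf algebras, π = i ∘ p and Π = m ∘ (id ⊗ (S ∘ π)) ∘ Δ as in the context. Then Π is an idempotent (Π ∘ Π = Π), and Π ∘ π = ι ∘ ε = π ∘ Π. -/
/-!
In the convolution algebra of linear endomorphisms of `B`, `Π = id * (S ∘ π)`. Since `π` is a
coalgebra map, `π * (S ∘ π) = (id * S) ∘ π` is the convolution unit `ι ∘ ε`, and `π ∘ S = S ∘ π`
because both are convolution inverses of `π`. With `π ∘ π = π` this gives `Π ∘ π = ι ∘ ε = π ∘ Π`.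
Idempotency rests on `Π (x π(y)) = Π(x) ε(y)`: writing `Π b = Σ b₍₁₎ π(S(π b₍₂₎))` we get
`Π (Π b) = Σ Π(b₍₁₎) ε(b₍₂₎) = Π b`.
-/

open TensorProduct

noncomputable section

variable {k : Type} [Field k]
variable {A : Type} [Ring A] [HopfAlgebra k A]
variable {B : Type} [Ring B] [HopfAlgebra k B]

/-- `π = i ∘ p : B → B`, for a split pair of Hopf algebras `(A, B, i, p)`. -/
def piMap (i : A →ₐc[k] B) (p : B →ₐc[k] A) : B →ₗ[k] B :=
  i.toLinearMap ∘ₗ p.toLinearMap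

/-- `Π = m ∘ (id ⊗ (S ∘ π)) ∘ Δ : B → B`, i.e. `Π(b) = Σ b₍₁₎ · S(π(b₍₂₎))`. -/
def PiMap (i : A →ₐc[k] B) (p : B →ₐc[k] A) : B →ₗ[k] B :=
  LinearMap.mul' k B ∘ₗ
    TensorProduct.map LinearMap.id (HopfAlgebra.antipode k ∘ₗ piMap i p) ∘ₗ
    (Coalgebra.comul : B →ₗ[k] B ⊗[k] B)

section

open Coalgebra HopfAlgebra WithConv

variable {R C D : Type*} [CommSemiring R]

lemma CoalgHom.toConv_mul_toConv_antipode_comp [AddCommMonoid C] [Module R C] [Coalgebra R C]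
    [Semiring D] [HopfAlgebra R D] (f : C →ₗc[R] D) :
    toConv (f : C →ₗ[R] D) * toConv (antipode R ∘ₗ (f : C →ₗ[R] D)) = 1 := by
  have h := LinearMap.convMul_comp_coalgHom_distrib (toConv LinearMap.id)
    (toConv (antipode R (A := D))) f
  rw [LinearMap.id_mul_antipode] at h
  exact WithConv.ofConv_injective (h.symm.trans (LinearMap.ext fun c => by simp))

lemma HopfAlgebra.sum_map_mul_antipode_map_eq_algebraMap_counit [AddCommMonoid C] [Module R C]
    [Coalgebra R C] [Semiring D] [HopfAlgebra R D] {F : Type*} [FunLike F C D]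
    [CoalgHomClass F R C D] (f : F) {c : C} {ι : Type*} (𝓡 : Repr R c ι) :
    ∑ j ∈ 𝓡.index, f (𝓡.left j) * antipode R (f (𝓡.right j)) = algebraMap R D (counit c) := by
  simpa using sum_mul_antipode_eq_algebraMap_counit (𝓡.induced f)

lemma AlgHom.toConv_comp_antipode_mul_toConv [Semiring C] [HopfAlgebra R C]
    [Semiring D] [Algebra R D] (f : C →ₐ[R] D) :
    toConv ((f : C →ₗ[R] D) ∘ₗ antipode R) * toConv (f : C →ₗ[R] D) = 1 := by
  have h := LinearMap.algHom_comp_convMul_distrib f (toConv (antipode R (A := C)))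
    (toConv LinearMap.id)
  rw [LinearMap.antipode_mul_id] at h
  exact WithConv.ofConv_injective (h.symm.trans (LinearMap.ext fun c => f.commutes _))

lemma BialgHom.map_antipode [Semiring C] [HopfAlgebra R C] [Semiring D] [HopfAlgebra R D]
    (f : C →ₐc[R] D) (c : C) : f (antipode R c) = antipode R (f c) := by
  have h : toConv ((f : C →ₗ[R] D) ∘ₗ antipode R) = toConv (antipode R ∘ₗ (f : C →ₗ[R] D)) :=
    left_inv_eq_right_inv (AlgHom.toConv_comp_antipode_mul_toConv (f : C →ₐ[R] D))
      (CoalgHom.toConv_mul_toConv_antipode_comp (f : C →ₗc[R] D))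
  exact congr($h c)

variable {H : Type*} [Semiring H] [HopfAlgebra R H]

def coinvariantsProjection (π : H →ₐc[R] H) : H →ₗ[R] H :=
  (toConv LinearMap.id * toConv (antipode R ∘ₗ (π : H →ₗ[R] H))).ofConv

lemma coinvariantsProjection_apply_eq_sum (π : H →ₐc[R] H) {x : H} {ι : Type*} (𝓡 : Repr R x ι) :
    coinvariantsProjection π x = ∑ j ∈ 𝓡.index, 𝓡.left j * antipode R (π (𝓡.right j)) :=
  𝓡.convMul_apply _ _

variable {π : H →ₐc[R] H} (hπ : ∀ h, π (π h) = π h)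
include hπ

lemma coinvariantsProjection_comp_eq_counit :
    coinvariantsProjection π ∘ₗ (π : H →ₗ[R] H) = Algebra.linearMap R H ∘ₗ counit := by
  ext h
  change coinvariantsProjection π (π h) = _
  rw [coinvariantsProjection_apply_eq_sum π ((ℛ R h).induced π)]
  simpa [hπ] using sum_map_mul_antipode_map_eq_algebraMap_counit π (ℛ R h)

lemma comp_coinvariantsProjection_eq_counit :
    (π : H →ₗ[R] H) ∘ₗ coinvariantsProjection π = Algebra.linearMap R H ∘ₗ counit := by
  ext h
  rw [LinearMap.comp_apply, coinvariantsProjection_apply_eq_sum π (ℛ R h)]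
  simpa [hπ, BialgHom.map_antipode] using
    sum_map_mul_antipode_map_eq_algebraMap_counit π (ℛ R h)

lemma coinvariantsProjection_mul_apply (x y : H) :
    coinvariantsProjection π (x * π y) =
      coinvariantsProjection π x * algebraMap R H (counit y) := by
  have hy := sum_map_mul_antipode_map_eq_algebraMap_counit π (ℛ R y)
  calc coinvariantsProjection π (x * π y)
      = ∑ i ∈ (ℛ R x).index, (ℛ R x).left i *
          (∑ j ∈ (ℛ R y).index, π ((ℛ R y).left j) * antipode R (π ((ℛ R y).right j))) *
            antipode R (π ((ℛ R x).right i)) := by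
        rw [coinvariantsProjection_apply_eq_sum π ((ℛ R x).mul ((ℛ R y).induced π))]
        simp [Finset.sum_product, Finset.mul_sum, Finset.sum_mul, antipode_mul_antidistrib, hπ,
          mul_assoc]
    _ = ∑ i ∈ (ℛ R x).index, (ℛ R x).left i * algebraMap R H (counit y) *
          antipode R (π ((ℛ R x).right i)) := by
        rw [hy]
    _ = coinvariantsProjection π x * algebraMap R H (counit y) := by
        rw [coinvariantsProjection_apply_eq_sum π (ℛ R x), Finset.sum_mul]
        simp [mul_assoc, Algebra.commutes]

lemma coinvariantsProjection_idem :
    coinvariantsProjection π ∘ₗ coinvariantsProjection π = coinvariantsProjection π := by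
  ext h
  have hπS (c : H) : π (antipode R (π c)) = antipode R (π c) := by
    rw [BialgHom.map_antipode, hπ]
  calc coinvariantsProjection π (coinvariantsProjection π h)
      = ∑ j ∈ (ℛ R h).index, coinvariantsProjection π
          ((ℛ R h).left j * π (antipode R (π ((ℛ R h).right j)))) := by
        simp only [coinvariantsProjection_apply_eq_sum π (ℛ R h), map_sum, hπS]
    _ = ∑ j ∈ (ℛ R h).index, coinvariantsProjection π ((ℛ R h).left j) *
          algebraMap R H (counit ((ℛ R h).right j)) := by
        simp only [coinvariantsProjection_mul_apply hπ, counit_antipode,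
          CoalgHomClass.counit_comp_apply]
    _ = (toConv (coinvariantsProjection π) * 1).ofConv h := by
        rw [(ℛ R h).convMul_apply]
        rfl
    _ = coinvariantsProjection π h := by rw [mul_one]

end

/-- For a split pair of Hopf algebras `(A, B, i, p)` with `π = i ∘ p` and
`Π = m ∘ (id ⊗ (S ∘ π)) ∘ Δ`, the map `Π` is an idempotent and `Π ∘ π = ι ∘ ε = π ∘ Π`. -/
theorem statement3 (i : A →ₐc[k] B) (p : B →ₐc[k] A) (hsplit : ∀ a : A, p (i a) = a) :
    PiMap i p ∘ₗ PiMap i p = PiMap i p ∧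
    PiMap i p ∘ₗ piMap i p =
      Algebra.linearMap k B ∘ₗ (Coalgebra.counit : B →ₗ[k] k) ∧
    piMap i p ∘ₗ PiMap i p =
      Algebra.linearMap k B ∘ₗ (Coalgebra.counit : B →ₗ[k] k) := by
  have hπ : ∀ b, i.comp p (i.comp p b) = i.comp p b := fun b => congrArg i (hsplit (p b))
  have hpi : piMap i p = (i.comp p : B →ₗ[k] B) := rfl
  have hPi : PiMap i p = coinvariantsProjection (i.comp p) := rfl
  rw [hpi, hPi]
  exact ⟨coinvariantsProjection_idem hπ, coinvariantsProjection_comp_eq_counit hπ,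
    comp_coinvariantsProjection_eq_counit hπ⟩
end
end

section
/- Let (A, B, i, p) be a split pair of Hopf algebras, with π, Π, L as in the context. Then for all b, b' ∈ B: (1) Π(b · b') = Σ b₍₁₎ · Π(b') · S(π(b₍₂₎)); (2) Π(b · π(b')) = ε(b') Π(b). Consequently the formula b ▷ x := Σ b₍₁₎ · x · S(π(b₍₂₎)) maps B ⊗ L into L (i.e. Π(b ▷ x) = b ▷ x whenever Π(x) = x) and defines a left B-module structure on L: (b b') ▷ x = b ▷ (b' ▷ x) and 1 ▷ x = x. -/
open TensorProduct

noncomputable section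

variable {k : Type} [Field k]
variable {A : Type} [Ring A] [HopfAlgebra k A]
variable {B : Type} [Ring B] [HopfAlgebra k B]

/-- The adjoint-type action `b ⊗ x ↦ b ▷ x = Σ b₍₁₎ · x · S(π(b₍₂₎))` of `B` on itself,
as a linear map `B ⊗ B → B`. -/
def adActT (i : A →ₐc[k] B) (p : B →ₐc[k] A) : B ⊗[k] B →ₗ[k] B :=
  LinearMap.mul' k B ∘ₗ
  LinearMap.rTensor B (LinearMap.mul' k B) ∘ₗ
  (TensorProduct.assoc k B B B).symm.toLinearMap ∘ₗ
  LinearMap.lTensor B (TensorProduct.comm k B B).toLinearMap ∘ₗ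
  (TensorProduct.assoc k B B B).toLinearMap ∘ₗ
  LinearMap.rTensor B
    (LinearMap.lTensor B (HopfAlgebra.antipode k ∘ₗ piMap i p) ∘ₗ
      (Coalgebra.comul : B →ₗ[k] B ⊗[k] B))

/-! Since `Π(b) = b ▷ 1`, identity (1) is the module law `(b b') ▷ 1 = b ▷ (b' ▷ 1)`, which holds
because `Δ` and `π` are multiplicative and `S` is anti-multiplicative. As `π` is an idempotent
coalgebra map, `Π(π b') = ε(b') 1`, and (2) follows from (1). Finally `S(π c)` lies in the image
of `π` because the antipode commutes with `i`, so (2) and (1) give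
`Π(b₍₁₎ x S(π b₍₂₎)) = ε(b₍₂₎) b₍₁₎ ▷ Π(x)`, which sums to `b ▷ x` when `Π(x) = x`. -/

open Coalgebra HopfAlgebra WithConv

lemma Coalgebra.sum_counit_right_smul {R C : Type*} [CommSemiring R] [AddCommMonoid C]
    [Module R C] [Coalgebra R C] {c : C} {ι : Type*} (𝓡 : Repr R c ι) :
    ∑ x ∈ 𝓡.index, counit (R := R) (𝓡.right x) • 𝓡.left x = c := by
  simpa only [map_sum, TensorProduct.rid_tmul, one_smul]
    using congr(TensorProduct.rid R R C $(sum_tmul_counit_eq (R := R) 𝓡))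

/-- `antipode ∘ f` and `f ∘ antipode` are a left and a right convolution inverse of `f`. -/
lemma BialgHom.map_antipode_s5 {R H H' : Type*} [CommSemiring R] [Semiring H] [Semiring H']
    [HopfAlgebra R H] [HopfAlgebra R H'] (f : H →ₐc[R] H') (a : H) :
    f (antipode R a) = antipode R (f a) := by
  have hl : toConv (antipode R ∘ₗ f.toLinearMap) * toConv f.toLinearMap = 1 := by
    apply ofConv_injective
    rw [← LinearMap.convOne_comp_coalgHom f.toCoalgHom, ← LinearMap.antipode_mul_id,
      LinearMap.convMul_comp_coalgHom_distrib]
    rfl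
  have hr : toConv f.toLinearMap * toConv (f.toLinearMap ∘ₗ antipode R) = 1 := by
    apply ofConv_injective
    rw [← LinearMap.algHom_comp_convOne (f : H →ₐ[R] H'), ← LinearMap.id_mul_antipode,
      LinearMap.algHom_comp_convMul_distrib]
    rfl
  exact congr(ofConv $(left_inv_eq_right_inv hl hr) a).symm

section SplitPair

variable (i : A →ₐc[k] B) (p : B →ₐc[k] A)

lemma piMap_apply (b : B) : piMap i p b = i (p b) := rfl

lemma piMap_mul (b b' : B) : piMap i p (b * b') = piMap i p b * piMap i p b' := by
  simp [piMap_apply]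

lemma piMap_one : piMap i p 1 = 1 := by
  simp [piMap_apply]

lemma counit_piMap (b : B) : counit (R := k) (piMap i p b) = counit b :=
  CoalgHomClass.counit_comp_apply (i.comp p) b

lemma adActT_tmul {b : B} {ι : Type*} (𝓡 : Repr k b ι) (x : B) :
    adActT i p (b ⊗ₜ[k] x) =
      ∑ j ∈ 𝓡.index, 𝓡.left j * x * antipode k (piMap i p (𝓡.right j)) := by
  simp [adActT, ← 𝓡.eq, map_sum, TensorProduct.sum_tmul]

lemma PiMap_eq_adActT_tmul_one (b : B) : PiMap i p b = adActT i p (b ⊗ₜ[k] 1) := by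
  simp [adActT_tmul i p (ℛ k b), PiMap, ← (ℛ k b).eq, map_sum]

lemma adActT_mul_tmul (b b' x : B) :
    adActT i p ((b * b') ⊗ₜ[k] x) = adActT i p (b ⊗ₜ[k] adActT i p (b' ⊗ₜ[k] x)) := by
  simp only [adActT_tmul i p ((ℛ k b).mul (ℛ k b')), adActT_tmul i p (ℛ k b),
    adActT_tmul i p (ℛ k b'), Finset.sum_product, Finset.mul_sum, Finset.sum_mul,
    Repr.mul_left, Repr.mul_right, Repr.mul_index, piMap_mul, antipode_mul_antidistrib, mul_assoc]

lemma adActT_one_tmul (x : B) : adActT i p ((1 : B) ⊗ₜ[k] x) = x := by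
  simp [adActT, Bialgebra.comul_one, Algebra.TensorProduct.one_def, piMap_one]

lemma PiMap_mul (b b' : B) : PiMap i p (b * b') = adActT i p (b ⊗ₜ[k] PiMap i p b') := by
  rw [PiMap_eq_adActT_tmul_one, adActT_mul_tmul, ← PiMap_eq_adActT_tmul_one]

variable {i p}

lemma piMap_antipode_piMap (hsplit : ∀ a : A, p (i a) = a) (b : B) :
    piMap i p (antipode k (piMap i p b)) = antipode k (piMap i p b) := by
  simp only [piMap_apply, ← BialgHom.map_antipode_s5, hsplit]

lemma PiMap_piMap (hsplit : ∀ a : A, p (i a) = a) (b : B) :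
    PiMap i p (piMap i p b) = counit (R := k) b • 1 := by
  let 𝓡 := (ℛ k b).induced (i.comp p)
  have h := sum_mul_antipode_eq_smul 𝓡
  simp only [𝓡, Repr.induced_index, Repr.induced_left, Repr.induced_right, Function.comp_apply,
    CoalgHomClass.counit_comp_apply] at h
  change PiMap i p (i.comp p b) = _
  rw [PiMap_eq_adActT_tmul_one, adActT_tmul i p 𝓡]
  simpa only [𝓡, Repr.induced_index, Repr.induced_left, Repr.induced_right, Function.comp_apply,
    mul_one, BialgHom.comp_apply, piMap_apply, hsplit] using h

lemma PiMap_mul_piMap (hsplit : ∀ a : A, p (i a) = a) (b b' : B) :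
    PiMap i p (b * piMap i p b') = counit (R := k) b' • PiMap i p b := by
  rw [PiMap_mul, PiMap_piMap hsplit, TensorProduct.tmul_smul, map_smul,
    ← PiMap_eq_adActT_tmul_one]

lemma PiMap_adActT_tmul (hsplit : ∀ a : A, p (i a) = a) {x : B} (hx : PiMap i p x = x)
    (b : B) :
    PiMap i p (adActT i p (b ⊗ₜ[k] x)) = adActT i p (b ⊗ₜ[k] x) := by
  let 𝓡 := ℛ k b
  calc PiMap i p (adActT i p (b ⊗ₜ[k] x))
      = ∑ j ∈ 𝓡.index,
          PiMap i p (𝓡.left j * x * antipode k (piMap i p (𝓡.right j))) := by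
        rw [adActT_tmul i p 𝓡, map_sum]
    _ = ∑ j ∈ 𝓡.index,
          counit (R := k) (𝓡.right j) • adActT i p (𝓡.left j ⊗ₜ[k] x) := by
        refine Finset.sum_congr rfl fun j _ => ?_
        rw [← piMap_antipode_piMap hsplit, PiMap_mul_piMap hsplit, counit_antipode,
          counit_piMap, PiMap_mul, hx]
    _ = adActT i p (b ⊗ₜ[k] x) := by
        simp_rw [← map_smul, TensorProduct.smul_tmul', ← map_sum, ← TensorProduct.sum_tmul,
          sum_counit_right_smul]

end SplitPair

/-- For a split pair of Hopf algebras `(A, B, i, p)`: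
(1) `Π(b · b') = Σ b₍₁₎ · Π(b') · S(π(b₍₂₎))`; (2) `Π(b · π(b')) = ε(b') Π(b)`.
Consequently `b ▷ x := Σ b₍₁₎ · x · S(π(b₍₂₎))` maps `B ⊗ L` into `L` and defines a left
`B`-module structure on `L`. -/
theorem statement5 (i : A →ₐc[k] B) (p : B →ₐc[k] A) (hsplit : ∀ a : A, p (i a) = a) :
    -- (1) `Π(b · b') = Σ b₍₁₎ · Π(b') · S(π(b₍₂₎))`
    (PiMap i p ∘ₗ LinearMap.mul' k B = adActT i p ∘ₗ LinearMap.lTensor B (PiMap i p)) ∧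
    -- (2) `Π(b · π(b')) = ε(b') Π(b)`
    (∀ b b' : B, PiMap i p (b * piMap i p b') = Coalgebra.counit (R := k) b' • PiMap i p b) ∧
    -- `▷` maps `B ⊗ L` into `L`
    (∀ b x : B, PiMap i p x = x →
      PiMap i p (adActT i p (b ⊗ₜ[k] x)) = adActT i p (b ⊗ₜ[k] x)) ∧
    -- `▷` is a left `B`-module structure on `L`
    (∀ b b' x : B, PiMap i p x = x →
      adActT i p ((b * b') ⊗ₜ[k] x) = adActT i p (b ⊗ₜ[k] adActT i p (b' ⊗ₜ[k] x))) ∧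
    (∀ x : B, PiMap i p x = x → adActT i p ((1 : B) ⊗ₜ[k] x) = x) :=
  ⟨TensorProduct.ext' fun b b' => PiMap_mul i p b b', PiMap_mul_piMap hsplit,
    fun b _ hx => PiMap_adActT_tmul hsplit hx b, fun b b' x _ => adActT_mul_tmul i p b b' x,
    fun x _ => adActT_one_tmul i p x⟩
end
end

section
/- Let (A, B, i, p) be a split pair of Hopf algebras, with π, Π, L as in the context. Then (id ⊗ π)(Δ(Π(b))) = Π(b) ⊗ 1 for every b ∈ B, and conversely any b ∈ B with (id ⊗ π)(Δ(b)) = b ⊗ 1 satisfies Π(b) = b. Hence L = { b ∈ B : (id ⊗ π)(Δ(b)) = b ⊗ 1 }. -/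
/-!
For an idempotent bialgebra endomorphism `e` of `H` (here `e = i ∘ p`), work in the convolution
monoid of linear maps `H → H ⊗ H`. The maps `T = (id ⊗ e) ∘ Δ`, `j = (· ⊗ 1)` and `r = (1 ⊗ e ·)`
are algebra maps, so composing them with the antipode inverts them, and `T = j * r`.
Since `Π = id * (S ∘ e)`, we get `T ∘ Π = T * (T ∘ S ∘ e)` and `j ∘ Π = j * (j ∘ S ∘ e)`.
Precomposition with the coalgebra map `e` is multiplicative and `r ∘ e = r`, so `T ∘ S ∘ e` is the
inverse of `T ∘ e = (j ∘ e) * r`, namely `(r ∘ S) * (j ∘ S ∘ e)`; hence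
`T ∘ Π = j * r * (r ∘ S) * (j ∘ S ∘ e) = j ∘ Π`. The converse follows from `S 1 = 1`.
-/

open TensorProduct

noncomputable section

variable {k : Type} [Field k]
variable {A : Type} [Ring A] [HopfAlgebra k A]
variable {B : Type} [Ring B] [HopfAlgebra k B]

open Coalgebra HopfAlgebra WithConv

namespace LinearMap

variable {R H C D : Type*} [CommSemiring R]

def precompConvHom [Semiring C] [Algebra R C] [AddCommMonoid H] [Module R H] [Coalgebra R H]
    [AddCommMonoid D] [Module R D] [Coalgebra R D] (g : D →ₗc[R] H) :
    WithConv (H →ₗ[R] C) →* WithConv (D →ₗ[R] C) where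
  toFun f := toConv (f.ofConv ∘ₗ g.toLinearMap)
  map_one' := by ext; simp
  map_mul' f f' := ofConv_injective (convMul_comp_coalgHom_distrib f f' g)

variable [Semiring H] [HopfAlgebra R H] [Semiring C] [Algebra R C]

lemma toConv_algHom_mul_comp_antipode (h : H →ₐ[R] C) :
    toConv h.toLinearMap * toConv (h.toLinearMap ∘ₗ antipode R) = 1 := by
  have := algHom_comp_convMul_distrib h (toConv id) (toConv (antipode R))
  rw [id_mul_antipode] at this
  ext x
  simpa using (LinearMap.congr_fun this x).symm

lemma toConv_algHom_comp_antipode_mul (h : H →ₐ[R] C) :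
    toConv (h.toLinearMap ∘ₗ antipode R) * toConv h.toLinearMap = 1 := by
  have := algHom_comp_convMul_distrib h (toConv (antipode R)) (toConv id)
  rw [antipode_mul_id] at this
  ext x
  simpa using (LinearMap.congr_fun this x).symm

end LinearMap

namespace HopfAlgebra

variable {R H C : Type*} [CommSemiring R] [Semiring H] [HopfAlgebra R H]

lemma toConv_lTensor_comp_comul (f : H →ₐ[R] H) :
    toConv (LinearMap.lTensor H f.toLinearMap ∘ₗ comul) =
      toConv (Algebra.TensorProduct.includeLeft : H →ₐ[R] H ⊗[R] H).toLinearMap *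
        toConv (Algebra.TensorProduct.includeRight.comp f).toLinearMap := by
  have hmul : LinearMap.mul' R (H ⊗[R] H) ∘ₗ
      map (Algebra.TensorProduct.includeLeft : H →ₐ[R] H ⊗[R] H).toLinearMap
        (Algebra.TensorProduct.includeRight.comp f).toLinearMap =
      LinearMap.lTensor H f.toLinearMap :=
    TensorProduct.ext' fun x y => by simp
  rw [LinearMap.convMul_def, ofConv_toConv, ofConv_toConv, ← LinearMap.comp_assoc, hmul]

def coinvariantProj (e : H →ₐc[R] H) : H →ₗ[R] H :=
  (toConv LinearMap.id * toConv (antipode R ∘ₗ e.toLinearMap)).ofConv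

variable {e : H →ₐc[R] H}

lemma algHom_comp_coinvariantProj [Semiring C] [Algebra R C] (h : H →ₐ[R] C) :
    h.toLinearMap ∘ₗ coinvariantProj e =
      (toConv h.toLinearMap *
        LinearMap.precompConvHom e (toConv (h.toLinearMap ∘ₗ antipode R))).ofConv :=
  LinearMap.algHom_comp_convMul_distrib h _ _

theorem lTensor_comul_coinvariantProj (he : ∀ b, e (e b) = e b) (b : H) :
    LinearMap.lTensor H e.toLinearMap (comul (coinvariantProj e b)) =
      coinvariantProj e b ⊗ₜ[R] 1 := by
  let T : H →ₐ[R] H ⊗[R] H :=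
    (Algebra.TensorProduct.map (.id R H) (e : H →ₐ[R] H)).comp (Bialgebra.comulAlgHom R H)
  let J : H →ₐ[R] H ⊗[R] H := Algebra.TensorProduct.includeLeft
  let K : H →ₐ[R] H ⊗[R] H := Algebra.TensorProduct.includeRight.comp e
  let P := LinearMap.precompConvHom (C := H ⊗[R] H) (e : H →ₗc[R] H)
  have hT : toConv T.toLinearMap = toConv J.toLinearMap * toConv K.toLinearMap :=
    toConv_lTensor_comp_comul (e : H →ₐ[R] H)
  have hK : P (toConv K.toLinearMap) = toConv K.toLinearMap := by
    ext x
    simp [P, K, LinearMap.precompConvHom, he]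
  have hinv : P (toConv (T.toLinearMap ∘ₗ antipode R)) =
      toConv (K.toLinearMap ∘ₗ antipode R) * P (toConv (J.toLinearMap ∘ₗ antipode R)) := by
    refine left_inv_eq_right_inv (a := P (toConv T.toLinearMap)) ?_ ?_
    · rw [← map_mul, LinearMap.toConv_algHom_comp_antipode_mul, map_one]
    · rw [hT, map_mul, hK, mul_assoc, ← mul_assoc (toConv K.toLinearMap),
        LinearMap.toConv_algHom_mul_comp_antipode, one_mul, ← map_mul,
        LinearMap.toConv_algHom_mul_comp_antipode, map_one]
  have hTJ : T.toLinearMap ∘ₗ coinvariantProj e = J.toLinearMap ∘ₗ coinvariantProj e := by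
    rw [algHom_comp_coinvariantProj, algHom_comp_coinvariantProj, hinv, hT, mul_assoc,
      ← mul_assoc (toConv K.toLinearMap), LinearMap.toConv_algHom_mul_comp_antipode, one_mul]
  exact LinearMap.congr_fun hTJ b

lemma coinvariantProj_eq_self {b : H}
    (hb : LinearMap.lTensor H e.toLinearMap (comul b) = b ⊗ₜ[R] 1) :
    coinvariantProj e b = b := by
  change LinearMap.mul' R H (LinearMap.lTensor H (antipode R ∘ₗ e.toLinearMap) (comul b)) = b
  rw [LinearMap.lTensor_comp_apply, hb]
  simp

theorem mem_range_coinvariantProj_iff (he : ∀ b, e (e b) = e b) {b : H} :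
    b ∈ LinearMap.range (coinvariantProj e) ↔
      LinearMap.lTensor H e.toLinearMap (comul b) = b ⊗ₜ[R] 1 :=
  ⟨by rintro ⟨c, rfl⟩; exact lTensor_comul_coinvariantProj he c,
    fun hb => ⟨b, coinvariantProj_eq_self hb⟩⟩

end HopfAlgebra

/-- For a split pair of Hopf algebras `(A, B, i, p)`:
`(id ⊗ π)(Δ(Π(b))) = Π(b) ⊗ 1` for every `b ∈ B`; conversely any `b` with
`(id ⊗ π)(Δ(b)) = b ⊗ 1` satisfies `Π(b) = b`. Hence `L = {b ∈ B | (id ⊗ π)(Δ b) = b ⊗ 1}`. -/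
theorem statement6 (i : A →ₐc[k] B) (p : B →ₐc[k] A) (hsplit : ∀ a : A, p (i a) = a) :
    (∀ b : B, LinearMap.lTensor B (piMap i p) (Coalgebra.comul (PiMap i p b)) =
      PiMap i p b ⊗ₜ[k] (1 : B)) ∧
    (∀ b : B, LinearMap.lTensor B (piMap i p) (Coalgebra.comul b) = b ⊗ₜ[k] (1 : B) →
      PiMap i p b = b) ∧
    (∀ b : B, b ∈ LinearMap.range (PiMap i p) ↔
      LinearMap.lTensor B (piMap i p) (Coalgebra.comul b) = b ⊗ₜ[k] (1 : B)) := by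
  have hidem : ∀ b, i.comp p (i.comp p b) = i.comp p b := fun b => congrArg i (hsplit (p b))
  have hpi : piMap i p = (i.comp p).toLinearMap := rfl
  have hPi : PiMap i p = coinvariantProj (i.comp p) := rfl
  rw [hpi, hPi]
  exact ⟨lTensor_comul_coinvariantProj hidem, fun _ => coinvariantProj_eq_self,
    fun _ => mem_range_coinvariantProj_iff hidem⟩
end
end

section
/- Let (A, B, i, p) be a split pair of Hopf algebras, with π, Π, L as in the context. Then L is a unital subalgebra of B: 1 ∈ L, and for all x, y ∈ L one has x · y ∈ L (equivalently, Π(Π(b) · Π(b')) = Π(b) · Π(b') for all b, b' ∈ B). -/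
open TensorProduct

noncomputable section

variable {k : Type} [Field k]
variable {A : Type} [Ring A] [HopfAlgebra k A]
variable {B : Type} [Ring B] [HopfAlgebra k B]

/-!
Write `e = i ∘ p`, an idempotent bialgebra endomorphism of `B`, and `ρ = (id ⊗ e) ∘ Δ`, an algebra
map `B → B ⊗ B`. The coinvariants `{x | ρ x = x ⊗ 1}` form a subalgebra, being an equalizer of two
algebra maps, and `Π x = m (id ⊗ S) (ρ x) = x` for every coinvariant `x`. So it suffices to see
that `Π(B)` consists of coinvariants, i.e. `ρ ∘ Π = ι₁ ∘ Π` with `ι₁ x = x ⊗ 1`, `ι₂ x = 1 ⊗ x`.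
This is a computation in the convolution algebra of linear maps `B → B ⊗ B`: there
`ρ = ι₁ * ι₂ e` and, since `S` is an anti-coalgebra map commuting with `e`, `ρ S e = ι₂ S e * ι₁ S e`;
as `ι₂ e * ι₂ S e = ι₂ ∘ (e * S e) = 1`, we get `ρ Π = ρ * ρ S e = ι₁ * ι₁ S e = ι₁ Π`.
-/

open WithConv Coalgebra HopfAlgebra

variable {R : Type*} [CommSemiring R]

section Convolution
variable {C C' A₁ A₂ : Type*} [AddCommMonoid C] [Module R C] [Coalgebra R C]
  [AddCommMonoid C'] [Module R C'] [Coalgebra R C']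
  [Semiring A₁] [Algebra R A₁] [Semiring A₂] [Algebra R A₂]

lemma TensorProduct.toConv_map_comp_comul (f : C →ₗ[R] A₁) (g : C →ₗ[R] A₂) :
    toConv (map f g ∘ₗ comul) =
      toConv (Algebra.TensorProduct.includeLeft.toLinearMap ∘ₗ f) *
        toConv (Algebra.TensorProduct.includeRight.toLinearMap ∘ₗ g) := by
  ext c
  simp [(ℛ R c).convMul_apply, ← (ℛ R c).eq, Algebra.TensorProduct.tmul_mul_tmul]

lemma TensorProduct.toConv_map_comp_comm_comp_comul (f : C →ₗ[R] A₁) (g : C →ₗ[R] A₂) :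
    toConv (map f g ∘ₗ (TensorProduct.comm R C C).toLinearMap ∘ₗ comul) =
      toConv (Algebra.TensorProduct.includeRight.toLinearMap ∘ₗ g) *
        toConv (Algebra.TensorProduct.includeLeft.toLinearMap ∘ₗ f) := by
  ext c
  simp [(ℛ R c).convMul_apply, ← (ℛ R c).eq, Algebra.TensorProduct.tmul_mul_tmul]

lemma AlgHom.toConv_comp_convMul (h : A₁ →ₐ[R] A₂) (f g : C →ₗ[R] A₁) :
    toConv (h.toLinearMap ∘ₗ (toConv f * toConv g).ofConv) =
      toConv (h.toLinearMap ∘ₗ f) * toConv (h.toLinearMap ∘ₗ g) :=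
  congrArg toConv (LinearMap.algHom_comp_convMul_distrib h (toConv f) (toConv g))

lemma AlgHom.toConv_comp_convOne (h : A₁ →ₐ[R] A₂) :
    toConv (h.toLinearMap ∘ₗ (1 : WithConv (C →ₗ[R] A₁)).ofConv) = 1 := by
  ext; simp

lemma CoalgHom.toConv_convMul_comp (h : C' →ₗc[R] C) (f g : C →ₗ[R] A₁) :
    toConv ((toConv f * toConv g).ofConv ∘ₗ h.toLinearMap) =
      toConv (f ∘ₗ h.toLinearMap) * toConv (g ∘ₗ h.toLinearMap) :=
  congrArg toConv (LinearMap.convMul_comp_coalgHom_distrib (toConv f) (toConv g) h)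

lemma CoalgHom.toConv_convOne_comp (h : C' →ₗc[R] C) :
    toConv ((1 : WithConv (C →ₗ[R] A₁)).ofConv ∘ₗ h.toLinearMap) = 1 := by
  ext; simp

end Convolution

namespace HopfAlgebra
variable {H H' A₁ C : Type*} [Semiring H] [HopfAlgebra R H] [Semiring H'] [HopfAlgebra R H']
  [Semiring A₁] [Algebra R A₁] [AddCommMonoid C] [Module R C] [Coalgebra R C]

lemma _root_.AlgHom.toConv_comp_antipode_mul_toConv_s7 (h : H →ₐ[R] A₁) :
    toConv (h.toLinearMap ∘ₗ antipode R) * toConv h.toLinearMap = 1 := by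
  have := AlgHom.toConv_comp_convMul h (antipode R) .id
  rw [LinearMap.antipode_mul_id, LinearMap.comp_id] at this
  rw [← this, AlgHom.toConv_comp_convOne]

lemma _root_.AlgHom.toConv_mul_toConv_comp_antipode (h : H →ₐ[R] A₁) :
    toConv h.toLinearMap * toConv (h.toLinearMap ∘ₗ antipode R) = 1 := by
  have := AlgHom.toConv_comp_convMul h .id (antipode R)
  rw [LinearMap.id_mul_antipode, LinearMap.comp_id] at this
  rw [← this, AlgHom.toConv_comp_convOne]

lemma _root_.CoalgHom.toConv_antipode_comp_mul_toConv (h : C →ₗc[R] H) :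
    toConv (antipode R ∘ₗ h.toLinearMap) * toConv h.toLinearMap = 1 := by
  have := CoalgHom.toConv_convMul_comp h (antipode R) .id
  rw [LinearMap.antipode_mul_id, LinearMap.id_comp] at this
  rw [← this, CoalgHom.toConv_convOne_comp]

lemma _root_.CoalgHom.toConv_mul_toConv_antipode_comp_s7 (h : C →ₗc[R] H) :
    toConv h.toLinearMap * toConv (antipode R ∘ₗ h.toLinearMap) = 1 := by
  have := CoalgHom.toConv_convMul_comp h .id (antipode R)
  rw [LinearMap.id_mul_antipode, LinearMap.id_comp] at this
  rw [← this, CoalgHom.toConv_convOne_comp]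

lemma _root_.BialgHom.toLinearMap_comp_antipode (f : H →ₐc[R] H') :
    f.toLinearMap ∘ₗ antipode R = antipode R ∘ₗ f.toLinearMap :=
  toConv_injective (left_inv_eq_right_inv
    (CoalgHom.toConv_antipode_comp_mul_toConv f.toCoalgHom)
    (AlgHom.toConv_mul_toConv_comp_antipode (f : H →ₐ[R] H'))).symm

/-- Both sides are convolution inverses of `Δ = ι₁ * ι₂`: the right-hand side is `ι₂ S * ι₁ S`. -/
lemma comul_comp_antipode :
    comul ∘ₗ antipode R =
      map (antipode R) (antipode R) ∘ₗ (TensorProduct.comm R H H).toLinearMap ∘ₗ comul := by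
  refine toConv_injective (left_inv_eq_right_inv
    (a := (toConv comul : WithConv (H →ₗ[R] H ⊗[R] H))) ?_ LinearMap.comul_right_inv).symm
  have hcomul := toConv_map_comp_comul (R := R) (LinearMap.id : H →ₗ[R] H) LinearMap.id
  simp only [map_id, LinearMap.id_comp, LinearMap.comp_id] at hcomul
  rw [toConv_map_comp_comm_comp_comul, hcomul, mul_assoc,
    ← mul_assoc (toConv (Algebra.TensorProduct.includeLeft.toLinearMap ∘ₗ antipode R)),
    AlgHom.toConv_comp_antipode_mul_toConv_s7, one_mul, AlgHom.toConv_comp_antipode_mul_toConv_s7]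

end HopfAlgebra

namespace BialgHom
variable {H : Type*} [Semiring H] [HopfAlgebra R H] (e : H →ₐc[R] H)

def rightCoaction : H →ₐ[R] H ⊗[R] H :=
  (Algebra.TensorProduct.map (AlgHom.id R H) (e : H →ₐ[R] H)).comp (Bialgebra.comulAlgHom R H)

lemma toLinearMap_rightCoaction :
    e.rightCoaction.toLinearMap = map LinearMap.id e.toLinearMap ∘ₗ comul := rfl

def coinvariants : Subalgebra R H :=
  AlgHom.equalizer e.rightCoaction Algebra.TensorProduct.includeLeft

def coinvariantProjection : H →ₗ[R] H :=
  (toConv LinearMap.id * toConv (antipode R ∘ₗ e.toLinearMap)).ofConv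

lemma coinvariantProjection_eq :
    e.coinvariantProjection = LinearMap.mul' R H ∘ₗ map LinearMap.id (antipode R) ∘ₗ
      e.rightCoaction.toLinearMap := by
  rw [toLinearMap_rightCoaction, ← LinearMap.comp_assoc _ (map _ _) (map _ _),
    ← map_comp, LinearMap.id_comp]
  rfl

lemma coinvariantProjection_eq_self_of_mem {x : H} (hx : x ∈ e.coinvariants) :
    e.coinvariantProjection x = x := by
  have hx' : e.rightCoaction x = x ⊗ₜ 1 := hx
  simp [coinvariantProjection_eq, hx']

variable {e}

lemma toLinearMap_comp_antipode_comp_of_idempotent (he : ∀ x, e (e x) = e x) :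
    e.toLinearMap ∘ₗ antipode R ∘ₗ e.toLinearMap = antipode R ∘ₗ e.toLinearMap := by
  rw [← LinearMap.comp_assoc, e.toLinearMap_comp_antipode, LinearMap.comp_assoc]
  congr 1
  ext x
  exact he x

lemma rightCoaction_comp_antipode_comp (he : ∀ x, e (e x) = e x) :
    e.rightCoaction.toLinearMap ∘ₗ antipode R ∘ₗ e.toLinearMap =
      map (antipode R ∘ₗ e.toLinearMap) (antipode R ∘ₗ e.toLinearMap) ∘ₗ
        (TensorProduct.comm R H H).toLinearMap ∘ₗ comul := by
  have hcomul : comul ∘ₗ e.toLinearMap = map e.toLinearMap e.toLinearMap ∘ₗ comul :=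
    (CoalgHomClass.map_comp_comul e).symm
  calc e.rightCoaction.toLinearMap ∘ₗ antipode R ∘ₗ e.toLinearMap
      = map LinearMap.id e.toLinearMap ∘ₗ map (antipode R) (antipode R) ∘ₗ
          (TensorProduct.comm R H H).toLinearMap ∘ₗ comul ∘ₗ e.toLinearMap := by
        rw [toLinearMap_rightCoaction, LinearMap.comp_assoc,
          ← LinearMap.comp_assoc e.toLinearMap (antipode R) comul,
          HopfAlgebra.comul_comp_antipode]
        simp only [LinearMap.comp_assoc]
    _ = map (antipode R ∘ₗ e.toLinearMap) (e.toLinearMap ∘ₗ antipode R ∘ₗ e.toLinearMap) ∘ₗ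
          (TensorProduct.comm R H H).toLinearMap ∘ₗ comul := by
        rw [hcomul]
        simp only [← LinearMap.comp_assoc]
        congr 1
        ext x y
        simp
    _ = _ := by rw [toLinearMap_comp_antipode_comp_of_idempotent he]

lemma coinvariantProjection_mem_coinvariants (he : ∀ x, e (e x) = e x) (b : H) :
    e.coinvariantProjection b ∈ e.coinvariants := by
  set inl := (Algebra.TensorProduct.includeLeft : H →ₐ[R] H ⊗[R] H)
  set inr := (Algebra.TensorProduct.includeRight : H →ₐ[R] H ⊗[R] H)
  set s := antipode R ∘ₗ e.toLinearMap
  have hρ : toConv e.rightCoaction.toLinearMap =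
      toConv inl.toLinearMap * toConv (inr.toLinearMap ∘ₗ e.toLinearMap) := by
    rw [toLinearMap_rightCoaction, toConv_map_comp_comul, LinearMap.comp_id]
  have hρs : toConv (e.rightCoaction.toLinearMap ∘ₗ s) =
      toConv (inr.toLinearMap ∘ₗ s) * toConv (inl.toLinearMap ∘ₗ s) := by
    rw [rightCoaction_comp_antipode_comp he, toConv_map_comp_comm_comp_comul]
  have hinv : toConv (inr.toLinearMap ∘ₗ e.toLinearMap) * toConv (inr.toLinearMap ∘ₗ s) = 1 := by
    rw [← AlgHom.toConv_comp_convMul, CoalgHom.toConv_mul_toConv_antipode_comp_s7 e.toCoalgHom,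
      AlgHom.toConv_comp_convOne]
  have hρPi : toConv (e.rightCoaction.toLinearMap ∘ₗ e.coinvariantProjection) =
      toConv (inl.toLinearMap ∘ₗ e.coinvariantProjection) := by
    calc toConv (e.rightCoaction.toLinearMap ∘ₗ e.coinvariantProjection)
        = toConv e.rightCoaction.toLinearMap * toConv (e.rightCoaction.toLinearMap ∘ₗ s) := by
          rw [coinvariantProjection, AlgHom.toConv_comp_convMul, LinearMap.comp_id]
      _ = toConv inl.toLinearMap * (toConv (inr.toLinearMap ∘ₗ e.toLinearMap) *
            toConv (inr.toLinearMap ∘ₗ s)) * toConv (inl.toLinearMap ∘ₗ s) := by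
          rw [hρ, hρs]; noncomm_ring
      _ = toConv (inl.toLinearMap ∘ₗ e.coinvariantProjection) := by
          rw [hinv, mul_one, coinvariantProjection, AlgHom.toConv_comp_convMul, LinearMap.comp_id]
  exact LinearMap.congr_fun (toConv_injective hρPi) b

end BialgHom

/-- For a split pair of Hopf algebras `(A, B, i, p)`, `L = Π(B)` is a unital
subalgebra of `B`: `1 ∈ L` and `L` is closed under multiplication (equivalently,
`Π(Π(b) · Π(b')) = Π(b) · Π(b')` for all `b, b' ∈ B`). -/
theorem statement7 (i : A →ₐc[k] B) (p : B →ₐc[k] A) (hsplit : ∀ a : A, p (i a) = a) :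
    ((1 : B) ∈ LinearMap.range (PiMap i p)) ∧
    (∀ x y : B, PiMap i p x = x → PiMap i p y = y → PiMap i p (x * y) = x * y) ∧
    (∀ b b' : B, PiMap i p (PiMap i p b * PiMap i p b') = PiMap i p b * PiMap i p b') := by
  have he : ∀ x, i.comp p (i.comp p x) = i.comp p x := fun x => congrArg i (hsplit (p x))
  have hmem : ∀ b, PiMap i p b ∈ (i.comp p).coinvariants :=
    (i.comp p).coinvariantProjection_mem_coinvariants he
  have hfix : ∀ {x}, x ∈ (i.comp p).coinvariants → PiMap i p x = x :=
    (i.comp p).coinvariantProjection_eq_self_of_mem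
  refine ⟨⟨1, hfix (one_mem _)⟩, fun x y hx hy => hfix (mul_mem ?_ ?_),
    fun b b' => hfix (mul_mem (hmem b) (hmem b'))⟩
  · exact hx ▸ hmem x
  · exact hy ▸ hmem y
end
end

section
/- Let (A, B, i, p) be a split pair of Hopf algebras with invertible antipode, and let L carry the Drinfeld–Yetter B-module structure π_L(b ⊗ x) = Σ b₍₁₎ · x · S(π(b₍₂₎)), π_L*(x) = Σ x₍₃₎ · S⁻¹(x₍₁₎) ⊗ x₍₂₎. For every Drinfeld–Yetter B-module (V, ρ, ρ*), the assignment g ↦ g(1) is a bijection from the set of linear maps g : L → V that are simultaneously B-module maps and B-comodule maps, onto the set { v ∈ V : ρ*(v) = 1 ⊗ v and ρ(i(a) ⊗ v) = ε(a)·v for all a ∈ A }; its inverse sends v to the map x ↦ ρ(x ⊗ v). -/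
open TensorProduct

noncomputable section

variable {k : Type} [Field k]
variable {A : Type} [Ring A] [HopfAlgebra k A]
variable {B : Type} [Ring B] [HopfAlgebra k B]

/-- The twice-iterated comultiplication `Δ⁽³⁾ = (Δ ⊗ id) ∘ Δ : B → (B ⊗ B) ⊗ B`. -/
def Delta3 : B →ₗ[k] (B ⊗[k] B) ⊗[k] B :=
  LinearMap.rTensor B (Coalgebra.comul : B →ₗ[k] B ⊗[k] B) ∘ₗ
    (Coalgebra.comul : B →ₗ[k] B ⊗[k] B)

/-- The map `θ : B → B ⊗ B`, `θ(b) = Σ x₍₃₎ · S⁻¹(x₍₁₎) ⊗ x₍₂₎` where `x = Π(b)` and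
`Δ⁽³⁾(x) = Σ x₍₁₎ ⊗ x₍₂₎ ⊗ x₍₃₎`; restricted to `L` this is the coaction `π_L*`. -/
def theta (i : A →ₐc[k] B) (p : B →ₐc[k] A) (S' : B →ₗ[k] B) : B →ₗ[k] B ⊗[k] B :=
  TensorProduct.map (LinearMap.mul' k B ∘ₗ LinearMap.lTensor B S') LinearMap.id ∘ₗ
  (TensorProduct.assoc k B B B).symm.toLinearMap ∘ₗ
  (TensorProduct.comm k (B ⊗[k] B) B).toLinearMap ∘ₗ
  Delta3 ∘ₗ PiMap i p

/-- A Drinfeld–Yetter module over a Hopf algebra `B` whose antipode has inverse `S'`: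
a left `B`-module structure `act` on `V` together with a right `B`-comodule structure
`coact : V → B ⊗ V` (in the conventions `((1 2)∘Δ ⊗ id) ∘ ρ* = (id ⊗ ρ*) ∘ ρ*` and
`(ε ⊗ id) ∘ ρ* = id`), satisfying the compatibility
`ρ*(b·v) = Σ b₍₃₎ v₍₋₁₎ S⁻¹(b₍₁₎) ⊗ b₍₂₎·v₍₀₎`, where `Δ⁽³⁾ = (Δ ⊗ id) ∘ Δ` and
`ρ*(v) = Σ v₍₋₁₎ ⊗ v₍₀₎` (stated in Sweedler form, for all finite representations of the
relevant tensors). -/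
structure IsDrinfeldYetter {R : Type} [CommRing R] {B : Type} [Ring B] [HopfAlgebra R B]
    (S' : B →ₗ[R] B) {V : Type} [AddCommGroup V] [Module R V]
    (act : B →ₗ[R] V →ₗ[R] V) (coact : V →ₗ[R] B ⊗[R] V) : Prop where
  act_mul : ∀ (b b' : B) (v : V), act (b * b') v = act b (act b' v)
  act_one : ∀ v : V, act 1 v = v
  coassoc : (TensorProduct.assoc R B B V).toLinearMap ∘ₗ
      TensorProduct.map ((TensorProduct.comm R B B).toLinearMap ∘ₗ
        (Coalgebra.comul : B →ₗ[R] B ⊗[R] B)) LinearMap.id ∘ₗ coact =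
    LinearMap.lTensor B coact ∘ₗ coact
  counit_coact : (TensorProduct.lid R V).toLinearMap ∘ₗ
      TensorProduct.map (Coalgebra.counit : B →ₗ[R] R) LinearMap.id ∘ₗ coact = LinearMap.id
  compat : ∀ (b : B) (v : V)
      (ι₁ : Type) (s₁ : Finset ι₁) (x y : ι₁ → B),
      Coalgebra.comul (R := R) b = ∑ i ∈ s₁, x i ⊗ₜ[R] y i →
      ∀ (ι₂ : Type) (s₂ : ι₁ → Finset ι₂) (x₁ x₂ : ι₁ → ι₂ → B),
      (∀ i ∈ s₁, Coalgebra.comul (R := R) (x i) = ∑ j ∈ s₂ i, x₁ i j ⊗ₜ[R] x₂ i j) →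
      ∀ (ι₃ : Type) (s₃ : Finset ι₃) (w : ι₃ → B) (u : ι₃ → V),
      coact v = ∑ l ∈ s₃, w l ⊗ₜ[R] u l →
      coact (act b v) =
        ∑ i ∈ s₁, ∑ j ∈ s₂ i, ∑ l ∈ s₃,
          (y i * w l * S' (x₁ i j)) ⊗ₜ[R] act (x₂ i j) (u l)


/-!
A morphism `g : L → V` is determined by `g 1`: since `Π 1 = 1` and `b ▷ 1 = Π b`, we get
`g b = g (b ▷ 1) = b · g 1`. The element `1 ∈ L` is coinvariant (`θ 1 = 1 ⊗ 1`) and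
`A`-invariant (`i a ▷ 1 = Π (i a) = ε a • 1`), so `g 1` is too. Conversely, on an `A`-invariant
vector `v` every `S (π b)` acts by `ε b`, because bialgebra maps commute with antipodes; hence
`(b ▷ x) · v = (b x) · v`, so `x ↦ x · v` is a module map on `L`, and with `ρ* v = 1 ⊗ v` the
Drinfeld–Yetter compatibility for `ρ* (x · v)` is literally the formula for `θ x`.
-/

namespace Coalgebra

lemma sum_counit_right_smul_s10 {R C : Type*} [CommSemiring R] [AddCommMonoid C] [Module R C]
    [Coalgebra R C] {c : C} {ι : Type*} (𝓡 : Repr R c ι) :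
    ∑ j ∈ 𝓡.index, counit (R := R) (𝓡.right j) • 𝓡.left j = c := by
  simpa only [map_sum, _root_.TensorProduct.rid_tmul, one_smul] using
    congrArg (_root_.TensorProduct.rid R C) (sum_tmul_counit_eq (R := R) 𝓡)

end Coalgebra

section BialgHom

open HopfAlgebra WithConv

variable {R H₁ H₂ : Type*} [CommRing R] [Ring H₁] [Ring H₂] [HopfAlgebra R H₁] [HopfAlgebra R H₂]

/-- Both sides are convolution inverses of `f` in `H₁ →ₗ[R] H₂`. -/
lemma BialgHom.antipode_comp (f : H₁ →ₐc[R] H₂) :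
    antipode R ∘ₗ f.toLinearMap = f.toLinearMap ∘ₗ antipode R := by
  have left_inv : toConv (f.toLinearMap ∘ₗ antipode R) * toConv f.toLinearMap = 1 := by
    apply WithConv.ofConv_injective
    calc _ = (AlgHomClass.toAlgHom f).toLinearMap ∘ₗ
            (toConv (antipode R) * toConv .id : WithConv (H₁ →ₗ[R] H₁)).ofConv := by
          rw [LinearMap.algHom_comp_convMul_distrib]; rfl
      _ = _ := by rw [LinearMap.antipode_mul_id, LinearMap.algHom_comp_convOne]
  have right_inv : toConv f.toLinearMap * toConv (antipode R ∘ₗ f.toLinearMap) = 1 := by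
    apply WithConv.ofConv_injective
    calc _ = (toConv .id * toConv (antipode R) : WithConv (H₂ →ₗ[R] H₂)).ofConv ∘ₗ
            f.toCoalgHom.toLinearMap := by
          rw [LinearMap.convMul_comp_coalgHom_distrib]; rfl
      _ = _ := by rw [LinearMap.id_mul_antipode, ← LinearMap.convOne_comp_coalgHom f.toCoalgHom]
  exact congrArg ofConv (left_inv_eq_right_inv left_inv right_inv).symm

lemma BialgHom.map_antipode_s10 (f : H₁ →ₐc[R] H₂) (a : H₁) :
    antipode R (f a) = f (antipode R a) :=
  LinearMap.congr_fun f.antipode_comp a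

end BialgHom

namespace SplitPair

open Coalgebra HopfAlgebra

variable (i : A →ₐc[k] B) (p : B →ₐc[k] A)

@[simp] lemma piMap_apply (b : B) : piMap i p b = i (p b) := rfl

lemma PiMap_eq_sum {b : B} {ι : Type*} (𝓡 : Repr k b ι) :
    PiMap i p b = ∑ j ∈ 𝓡.index, 𝓡.left j * antipode k (i (p (𝓡.right j))) := by
  simp [PiMap, ← 𝓡.eq, map_sum]

lemma adActT_tmul_eq_sum {b : B} {ι : Type*} (𝓡 : Repr k b ι) (x : B) :
    adActT i p (b ⊗ₜ[k] x) = ∑ j ∈ 𝓡.index, 𝓡.left j * x * antipode k (i (p (𝓡.right j))) := by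
  simp [adActT, ← 𝓡.eq, map_sum, TensorProduct.sum_tmul]

lemma theta_eq_sum (S' : B →ₗ[k] B) {x : B} (hx : PiMap i p x = x) {ι κ : Type*}
    (𝓡 : Repr k x ι) (𝓡₁ : ∀ j, Repr k (𝓡.left j) κ) :
    theta i p S' x = ∑ j ∈ 𝓡.index, ∑ l ∈ (𝓡₁ j).index,
      (𝓡.right j * S' ((𝓡₁ j).left l)) ⊗ₜ[k] (𝓡₁ j).right l := by
  simp [theta, Delta3, hx, ← 𝓡.eq, ← (𝓡₁ _).eq, map_sum, TensorProduct.sum_tmul]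

lemma adActT_tmul_one (b : B) : adActT i p (b ⊗ₜ[k] 1) = PiMap i p b := by
  simp [adActT_tmul_eq_sum i p (ℛ k b), PiMap_eq_sum i p (ℛ k b)]

lemma PiMap_one : PiMap i p (1 : B) = 1 := by
  simp [PiMap, Bialgebra.comul_one, Algebra.TensorProduct.one_def]

lemma PiMap_apply_map (hsplit : ∀ a : A, p (i a) = a) (a : A) :
    PiMap i p (i a) = counit (R := k) a • 1 := by
  rw [PiMap_eq_sum i p ((ℛ k a).induced i)]
  simpa [hsplit] using sum_mul_antipode_eq_smul ((ℛ k a).induced i)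

lemma theta_one (S' : B →ₗ[k] B) (hS' : S' 1 = 1) : theta i p S' 1 = 1 ⊗ₜ[k] 1 := by
  simp [theta, Delta3, PiMap_one, Bialgebra.comul_one, Algebra.TensorProduct.one_def, hS']

variable {V : Type} [AddCommGroup V] [Module k V]

/-- `g : B → V` stands for the map `g|_L : L → V`; the first condition says `g = g ∘ Π`. -/
def IsDYHom (S' : B →ₗ[k] B) (act : B →ₗ[k] V →ₗ[k] V) (coact : V →ₗ[k] B ⊗[k] V)
    (g : B →ₗ[k] V) : Prop :=
  (∀ x : B, g (PiMap i p x) = g x) ∧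
  (∀ (b x : B), PiMap i p x = x → g (adActT i p (b ⊗ₜ[k] x)) = act b (g x)) ∧
  (∀ x : B, PiMap i p x = x → LinearMap.lTensor B g (theta i p S' x) = coact (g x))

namespace IsDYHom

variable {i p} {S' : B →ₗ[k] B} {act : B →ₗ[k] V →ₗ[k] V} {coact : V →ₗ[k] B ⊗[k] V}
  {g : B →ₗ[k] V}

lemma apply_eq_act_apply_one (hg : IsDYHom i p S' act coact g) (b : B) : g b = act b (g 1) := by
  rw [← hg.2.1 b 1 (PiMap_one i p), adActT_tmul_one, hg.1]

lemma act_map_apply_one (hsplit : ∀ a : A, p (i a) = a) (hg : IsDYHom i p S' act coact g)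
    (a : A) : act (i a) (g 1) = counit (R := k) a • g 1 := by
  rw [← hg.2.1 (i a) 1 (PiMap_one i p), adActT_tmul_one, PiMap_apply_map i p hsplit, map_smul]

lemma coact_apply_one (hS' : S' 1 = 1) (hg : IsDYHom i p S' act coact g) :
    coact (g 1) = 1 ⊗ₜ[k] g 1 := by
  rw [← hg.2.2 1 (PiMap_one i p), theta_one i p S' hS', LinearMap.lTensor_tmul]

end IsDYHom

variable {i p} {act : B →ₗ[k] V →ₗ[k] V} {v : V}

lemma act_antipode_piMap (hv : ∀ a : A, act (i a) v = counit (R := k) a • v) (b : B) :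
    act (antipode k (i (p b))) v = counit (R := k) b • v := by
  rw [i.map_antipode_s10, hv, counit_antipode, CoalgHomClass.counit_comp_apply]

lemma act_adActT (hv : ∀ a : A, act (i a) v = counit (R := k) a • v)
    (hmul : ∀ (b b' : B) (w : V), act (b * b') w = act b (act b' w)) (b x : B) :
    act (adActT i p (b ⊗ₜ[k] x)) v = act (b * x) v := by
  conv_rhs => rw [← sum_counit_right_smul_s10 (ℛ k b)]
  simp [adActT_tmul_eq_sum i p (ℛ k b), hmul, act_antipode_piMap hv, Finset.sum_mul]

lemma flip_comp_PiMap (hv : ∀ a : A, act (i a) v = counit (R := k) a • v)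
    (hmul : ∀ (b b' : B) (w : V), act (b * b') w = act b (act b' w)) :
    act.flip v ∘ₗ PiMap i p = act.flip v := by
  ext b
  simp [← adActT_tmul_one, act_adActT hv hmul]

lemma lTensor_flip_theta {S' : B →ₗ[k] B} {coact : V →ₗ[k] B ⊗[k] V}
    (hDY : IsDrinfeldYetter S' act coact) (hv : coact v = 1 ⊗ₜ[k] v) {x : B}
    (hx : PiMap i p x = x) :
    LinearMap.lTensor B (act.flip v) (theta i p S' x) = coact (act x v) := by
  have hv' : coact v = ∑ _u ∈ (Finset.univ : Finset Unit), (1 : B) ⊗ₜ[k] v := by simpa using hv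
  rw [theta_eq_sum i p S' hx (ℛ k x) (fun j => ℛ k _),
    hDY.compat x v _ _ _ _ (ℛ k x).eq.symm _ (fun j => (ℛ k _).index) _ _
      (fun j _ => (ℛ k _).eq.symm) _ _ _ _ hv']
  simp [map_sum]

lemma isDYHom_flip_comp_PiMap {S' : B →ₗ[k] B} {coact : V →ₗ[k] B ⊗[k] V}
    (hDY : IsDrinfeldYetter S' act coact) (hcoact : coact v = 1 ⊗ₜ[k] v)
    (hv : ∀ a : A, act (i a) v = counit (R := k) a • v) :
    IsDYHom i p S' act coact (act.flip v ∘ₗ PiMap i p) := by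
  rw [flip_comp_PiMap hv hDY.act_mul]
  refine ⟨fun x => ?_, fun b x _ => ?_, fun x hx => lTensor_flip_theta hDY hcoact hx⟩
  · simpa [adActT_tmul_one] using act_adActT hv hDY.act_mul x 1
  · simpa [hDY.act_mul] using act_adActT hv hDY.act_mul b x

lemma flip_comp_PiMap_apply_one (hmul : ∀ (b b' : B) (w : V), act (b * b') w = act b (act b' w))
    (hone : ∀ w : V, act 1 w = w) (hv : ∀ a : A, act (i a) v = counit (R := k) a • v) :
    (act.flip v ∘ₗ PiMap i p) 1 = v := by
  simp [flip_comp_PiMap hv hmul, hone]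

end SplitPair

open SplitPair

theorem statement10_general (i : A →ₐc[k] B) (p : B →ₐc[k] A) (hsplit : ∀ a : A, p (i a) = a)
    (S' : B →ₗ[k] B)
    (hS'₁ : S' ∘ₗ (HopfAlgebra.antipode k : B →ₗ[k] B) = LinearMap.id)
    {V : Type} [AddCommGroup V] [Module k V]
    (act : B →ₗ[k] V →ₗ[k] V) (coact : V →ₗ[k] B ⊗[k] V)
    (hDY : IsDrinfeldYetter S' act coact) :
    -- `g ↦ g(1)` is a bijection between the two sets
    Set.BijOn (fun g : B →ₗ[k] V => g 1)
      {g : B →ₗ[k] V |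
        (∀ x : B, g (PiMap i p x) = g x) ∧
        (∀ (b x : B), PiMap i p x = x → g (adActT i p (b ⊗ₜ[k] x)) = act b (g x)) ∧
        (∀ x : B, PiMap i p x = x → LinearMap.lTensor B g (theta i p S' x) = coact (g x))}
      {v : V | coact v = (1 : B) ⊗ₜ[k] v ∧
        ∀ a : A, act (i a) v = Coalgebra.counit (R := k) a • v} ∧
    -- the inverse sends `v` to the map `x ↦ ρ(x ⊗ v)` on `L`
    (∀ v : V, coact v = (1 : B) ⊗ₜ[k] v →
      (∀ a : A, act (i a) v = Coalgebra.counit (R := k) a • v) →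
      (act.flip v ∘ₗ PiMap i p) ∈
        {g : B →ₗ[k] V |
          (∀ x : B, g (PiMap i p x) = g x) ∧
          (∀ (b x : B), PiMap i p x = x → g (adActT i p (b ⊗ₜ[k] x)) = act b (g x)) ∧
          (∀ x : B, PiMap i p x = x → LinearMap.lTensor B g (theta i p S' x) = coact (g x))} ∧
      (act.flip v ∘ₗ PiMap i p) 1 = v) ∧
    (∀ g : B →ₗ[k] V,
      (∀ x : B, g (PiMap i p x) = g x) →
      (∀ (b x : B), PiMap i p x = x → g (adActT i p (b ⊗ₜ[k] x)) = act b (g x)) →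
      (∀ x : B, PiMap i p x = x → LinearMap.lTensor B g (theta i p S' x) = coact (g x)) →
      ∀ x : B, PiMap i p x = x → g x = act x (g 1)) := by
  have hS' : S' 1 = 1 := by simpa using LinearMap.congr_fun hS'₁ 1
  have inverse (v : V) (hcoact : coact v = 1 ⊗ₜ[k] v)
      (hv : ∀ a : A, act (i a) v = Coalgebra.counit (R := k) a • v) :
      IsDYHom i p S' act coact (act.flip v ∘ₗ PiMap i p) ∧ (act.flip v ∘ₗ PiMap i p) 1 = v :=
    ⟨isDYHom_flip_comp_PiMap hDY hcoact hv, flip_comp_PiMap_apply_one hDY.act_mul hDY.act_one hv⟩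
  refine ⟨⟨fun g hg => ?_, fun g hg g' hg' h => ?_, fun v hv => ⟨_, inverse v hv.1 hv.2⟩⟩,
    inverse, fun g hPi hact hcoact x _ => IsDYHom.apply_eq_act_apply_one ⟨hPi, hact, hcoact⟩ x⟩
  · exact ⟨IsDYHom.coact_apply_one hS' hg, IsDYHom.act_map_apply_one hsplit hg⟩
  · ext b
    rw [IsDYHom.apply_eq_act_apply_one hg, IsDYHom.apply_eq_act_apply_one hg']
    exact congrArg (act b) h

/-- Universal property of `L`: for every Drinfeld–Yetter `B`-module
`(V, ρ, ρ*)`, the assignment `g ↦ g(1)` is a bijection from the set of linear maps `L → V`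
that are simultaneously `B`-module and `B`-comodule maps (encoded as linear maps `g : B → V`
factoring through `Π`) onto `{v ∈ V | ρ*(v) = 1 ⊗ v and ρ(i(a) ⊗ v) = ε(a)·v for all a ∈ A}`;
its inverse sends `v` to the map `x ↦ ρ(x ⊗ v)` (for `x ∈ L`). -/
theorem statement10 (i : A →ₐc[k] B) (p : B →ₐc[k] A) (hsplit : ∀ a : A, p (i a) = a)
    (S' : B →ₗ[k] B)
    (hS'₁ : S' ∘ₗ (HopfAlgebra.antipode k : B →ₗ[k] B) = LinearMap.id)
    (hS'₂ : (HopfAlgebra.antipode k : B →ₗ[k] B) ∘ₗ S' = LinearMap.id)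
    {V : Type} [AddCommGroup V] [Module k V]
    (act : B →ₗ[k] V →ₗ[k] V) (coact : V →ₗ[k] B ⊗[k] V)
    (hDY : IsDrinfeldYetter S' act coact) :
    -- `g ↦ g(1)` is a bijection between the two sets
    Set.BijOn (fun g : B →ₗ[k] V => g 1)
      {g : B →ₗ[k] V |
        (∀ x : B, g (PiMap i p x) = g x) ∧
        (∀ (b x : B), PiMap i p x = x → g (adActT i p (b ⊗ₜ[k] x)) = act b (g x)) ∧
        (∀ x : B, PiMap i p x = x → LinearMap.lTensor B g (theta i p S' x) = coact (g x))}
      {v : V | coact v = (1 : B) ⊗ₜ[k] v ∧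
        ∀ a : A, act (i a) v = Coalgebra.counit (R := k) a • v} ∧
    -- the inverse sends `v` to the map `x ↦ ρ(x ⊗ v)` on `L`
    (∀ v : V, coact v = (1 : B) ⊗ₜ[k] v →
      (∀ a : A, act (i a) v = Coalgebra.counit (R := k) a • v) →
      (act.flip v ∘ₗ PiMap i p) ∈
        {g : B →ₗ[k] V |
          (∀ x : B, g (PiMap i p x) = g x) ∧
          (∀ (b x : B), PiMap i p x = x → g (adActT i p (b ⊗ₜ[k] x)) = act b (g x)) ∧
          (∀ x : B, PiMap i p x = x → LinearMap.lTensor B g (theta i p S' x) = coact (g x))} ∧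
      (act.flip v ∘ₗ PiMap i p) 1 = v) ∧
    (∀ g : B →ₗ[k] V,
      (∀ x : B, g (PiMap i p x) = g x) →
      (∀ (b x : B), PiMap i p x = x → g (adActT i p (b ⊗ₜ[k] x)) = act b (g x)) →
      (∀ x : B, PiMap i p x = x → LinearMap.lTensor B g (theta i p S' x) = coact (g x)) →
      ∀ x : B, PiMap i p x = x → g x = act x (g 1)) :=
  statement10_general i p hsplit S' hS'₁ act coact hDY
end
end

section
/- Let B be a Hopf algebra over a commutative ring with invertible antipode, and let M̂ denote the Drinfeld–Yetter B-module whose underlying module is B, with action b ▷ x = Σ b₍₂₎ · x · S⁻¹(b₍₁₎) and coaction (1 2) ∘ Δ. For every Drinfeld–Yetter B-module (V, ρ, ρ*), the assignment g ↦ ε ∘ g is a bijection from the set of linear maps g : V → M̂ that are simultaneously B-module maps and B-comodule maps, onto the set of linear maps f : V → k satisfying f(ρ(b ⊗ v)) = ε(b) f(v) for all b ∈ B, v ∈ V; its inverse sends f to the map (id ⊗ f) ∘ ρ*. -/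
open TensorProduct

noncomputable section

variable {R : Type} [CommRing R]
variable {B : Type} [Ring B] [HopfAlgebra R B]

/-- The adjoint action `b ⊗ x ↦ Σ b₍₂₎ · x · S⁻¹(b₍₁₎)` of `B` on itself, as a linear map
`B ⊗ B → B`; this is the action of the Drinfeld–Yetter module `M̂`. -/
def adjActT (S' : B →ₗ[R] B) : B ⊗[R] B →ₗ[R] B :=
  LinearMap.mul' R B ∘ₗ
  LinearMap.rTensor B (LinearMap.mul' R B) ∘ₗ
  (TensorProduct.assoc R B B B).symm.toLinearMap ∘ₗ
  LinearMap.lTensor B (TensorProduct.comm R B B).toLinearMap ∘ₗ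
  (TensorProduct.assoc R B B B).toLinearMap ∘ₗ
  LinearMap.rTensor B
    (LinearMap.lTensor B S' ∘ₗ (TensorProduct.comm R B B).toLinearMap ∘ₗ
      (Coalgebra.comul : B →ₗ[R] B ⊗[R] B))

/-!
The two assignments are mutually inverse by counitality alone: `ε ∘ (id ⊗ f) ∘ ρ* = f` by
counitality of `ρ*`, and `(id ⊗ (ε ∘ g)) ∘ ρ* = g` for a comodule map `g` by counitality of `Δ`.
It remains to see that they land in the right sets. Since `ε` is multiplicative and `ε ∘ S⁻¹ = ε`,
`ε ∘ g` is `ε`-invariant when `g` is a module map. Coassociativity of `ρ*` makes `(id ⊗ f) ∘ ρ*` a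
comodule map, and the Drinfeld–Yetter compatibility turns `(id ⊗ f) ∘ ρ*` into a module map once
`f(b₍₂₎ · v₍₀₎) = ε(b₍₂₎) f(v₍₀₎)` collapses `Σ S⁻¹(b₍₁₎) ε(b₍₂₎)` to `S⁻¹(b)`.
-/
lemma Coalgebra.sum_counit_right_smul_left {a : B} {ι : Type} (𝓡 : Coalgebra.Repr R a ι) :
    ∑ i ∈ 𝓡.index, Coalgebra.counit (R := R) (𝓡.right i) • 𝓡.left i = a := by
  simpa only [map_sum, _root_.TensorProduct.rid_tmul, one_smul] using
    congrArg (_root_.TensorProduct.rid R B) (Coalgebra.sum_tmul_counit_eq 𝓡)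

lemma counit_apply_of_antipode_comp_eq_id {S' : B →ₗ[R] B}
    (hS' : (HopfAlgebra.antipode R : B →ₗ[R] B) ∘ₗ S' = LinearMap.id) (b : B) :
    Coalgebra.counit (R := R) (S' b) = Coalgebra.counit (R := R) b := by
  rw [← HopfAlgebra.counit_antipode (R := R) (S' b), ← LinearMap.comp_apply (g := S'), hS',
    LinearMap.id_apply]

lemma adjActT_tmul (S' : B →ₗ[R] B) (b c : B) {ι : Type} (𝓡 : Coalgebra.Repr R b ι) :
    adjActT S' (b ⊗ₜ[R] c) = ∑ i ∈ 𝓡.index, 𝓡.right i * c * S' (𝓡.left i) := by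
  simp only [adjActT, ← 𝓡.eq, LinearMap.coe_comp, Function.comp_apply, LinearEquiv.coe_coe,
    map_sum, LinearMap.rTensor_tmul, LinearMap.lTensor_tmul, TensorProduct.comm_tmul,
    TensorProduct.sum_tmul, TensorProduct.assoc_tmul, TensorProduct.assoc_symm_tmul,
    LinearMap.mul'_apply]

lemma counit_adjActT_tmul {S' : B →ₗ[R] B}
    (hS' : (HopfAlgebra.antipode R : B →ₗ[R] B) ∘ₗ S' = LinearMap.id) (b c : B) :
    Coalgebra.counit (R := R) (adjActT S' (b ⊗ₜ[R] c)) =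
      Coalgebra.counit (R := R) b * Coalgebra.counit (R := R) c := by
  rw [adjActT_tmul S' b c (Coalgebra.Repr.arbitrary R b)]
  conv_rhs => rw [← Coalgebra.sum_counit_smul (Coalgebra.Repr.arbitrary R b)]
  simp only [map_sum, map_smul, Bialgebra.counit_mul, counit_apply_of_antipode_comp_eq_id hS',
    smul_eq_mul, Finset.sum_mul]
  exact Finset.sum_congr rfl fun _ _ => by ring

section

variable {V : Type} [AddCommGroup V] [Module R V]

def coactLift (coact : V →ₗ[R] B ⊗[R] V) (f : V →ₗ[R] R) : V →ₗ[R] B :=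
  (TensorProduct.rid R B).toLinearMap ∘ₗ LinearMap.lTensor B f ∘ₗ coact

lemma counit_comp_coactLift {coact : V →ₗ[R] B ⊗[R] V}
    (hcounit : (TensorProduct.lid R V).toLinearMap ∘ₗ
      TensorProduct.map (Coalgebra.counit : B →ₗ[R] R) LinearMap.id ∘ₗ coact = LinearMap.id)
    (f : V →ₗ[R] R) :
    (Coalgebra.counit : B →ₗ[R] R) ∘ₗ coactLift coact f = f := by
  have hswap : (Coalgebra.counit : B →ₗ[R] R) ∘ₗ (TensorProduct.rid R B).toLinearMap ∘ₗ
      LinearMap.lTensor B f = f ∘ₗ (TensorProduct.lid R V).toLinearMap ∘ₗ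
        TensorProduct.map (Coalgebra.counit : B →ₗ[R] R) LinearMap.id := by
    ext w u
    simp [mul_comm]
  calc (Coalgebra.counit : B →ₗ[R] R) ∘ₗ coactLift coact f
      = (f ∘ₗ (TensorProduct.lid R V).toLinearMap ∘ₗ
          TensorProduct.map (Coalgebra.counit : B →ₗ[R] R) LinearMap.id) ∘ₗ coact := by
        rw [← hswap]; rfl
    _ = f := by simp only [LinearMap.comp_assoc, hcounit, LinearMap.comp_id]

lemma coactLift_counit_comp (coact : V →ₗ[R] B ⊗[R] V) {g : V →ₗ[R] B}
    (hg : ∀ v : V, TensorProduct.comm R B B (Coalgebra.comul (R := R) (g v)) =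
      LinearMap.lTensor B g (coact v)) :
    coactLift coact ((Coalgebra.counit : B →ₗ[R] R) ∘ₗ g) = g := by
  ext v
  rw [coactLift, LinearMap.lTensor_comp, LinearMap.comp_apply, LinearMap.comp_apply,
    LinearMap.comp_apply, ← hg v, ← LinearMap.comm_comp_rTensor_comp_comm_eq]
  simp

lemma lTensor_rid_lTensor_comp_assoc (f : V →ₗ[R] R) :
    LinearMap.lTensor B ((TensorProduct.rid R B).toLinearMap ∘ₗ LinearMap.lTensor B f) ∘ₗ
        (TensorProduct.assoc R B B V).toLinearMap =
      (TensorProduct.rid R (B ⊗[R] B)).toLinearMap ∘ₗ LinearMap.lTensor (B ⊗[R] B) f := by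
  ext
  simp

lemma comm_comul_comp_rid_lTensor (f : V →ₗ[R] R) :
    (TensorProduct.comm R B B).toLinearMap ∘ₗ (Coalgebra.comul : B →ₗ[R] B ⊗[R] B) ∘ₗ
        (TensorProduct.rid R B).toLinearMap ∘ₗ LinearMap.lTensor B f =
      LinearMap.lTensor B ((TensorProduct.rid R B).toLinearMap ∘ₗ LinearMap.lTensor B f) ∘ₗ
        (TensorProduct.assoc R B B V).toLinearMap ∘ₗ
        TensorProduct.map ((TensorProduct.comm R B B).toLinearMap ∘ₗ
          (Coalgebra.comul : B →ₗ[R] B ⊗[R] B)) LinearMap.id := by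
  conv_rhs => rw [← LinearMap.comp_assoc, lTensor_rid_lTensor_comp_assoc]
  ext w u
  simp

lemma comm_comul_coactLift {coact : V →ₗ[R] B ⊗[R] V}
    (hcoassoc : (TensorProduct.assoc R B B V).toLinearMap ∘ₗ
      TensorProduct.map ((TensorProduct.comm R B B).toLinearMap ∘ₗ
        (Coalgebra.comul : B →ₗ[R] B ⊗[R] B)) LinearMap.id ∘ₗ coact =
      LinearMap.lTensor B coact ∘ₗ coact)
    (f : V →ₗ[R] R) (v : V) :
    TensorProduct.comm R B B (Coalgebra.comul (R := R) (coactLift coact f v)) =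
      LinearMap.lTensor B (coactLift coact f) (coact v) := by
  have h := congr($(comm_comul_comp_rid_lTensor f) (coact v))
  have h' := congr($(hcoassoc) v)
  simp only [LinearMap.comp_apply, LinearEquiv.coe_coe] at h h'
  simp only [coactLift, LinearMap.comp_apply, LinearEquiv.coe_coe]
  rw [h, h', ← LinearMap.lTensor_comp_apply]
  rfl

open Coalgebra in
lemma coactLift_act {S' : B →ₗ[R] B} {act : B →ₗ[R] V →ₗ[R] V} {coact : V →ₗ[R] B ⊗[R] V}
    (hDY : IsDrinfeldYetter S' act coact) {f : V →ₗ[R] R}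
    (hf : ∀ (b : B) (v : V), f (act b v) = counit (R := R) b * f v) (b : B) (v : V) :
    coactLift coact f (act b v) = adjActT S' (b ⊗ₜ[R] coactLift coact f v) := by
  let 𝓡 := ℛ R b
  obtain ⟨s, hs⟩ := TensorProduct.exists_finset (R := R) (coact v)
  have hcoact := hDY.compat b v _ 𝓡.index 𝓡.left 𝓡.right 𝓡.eq.symm _
    (fun i => (ℛ R (𝓡.left i)).index) (fun i => (ℛ R (𝓡.left i)).left)
    (fun i => (ℛ R (𝓡.left i)).right) (fun i _ => (ℛ R (𝓡.left i)).eq.symm)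
    _ s Prod.fst Prod.snd hs
  have hv : coactLift coact f v = ∑ l ∈ s, f l.2 • l.1 := by
    simp [coactLift, hs, map_sum]
  rw [hv, adjActT_tmul S' b _ 𝓡, coactLift, LinearMap.comp_apply, LinearMap.comp_apply, hcoact]
  simp only [map_sum, LinearMap.lTensor_tmul, LinearEquiv.coe_coe, TensorProduct.rid_tmul, hf]
  refine Finset.sum_congr rfl fun i _ => ?_
  conv_rhs => rw [← sum_counit_right_smul_left (ℛ R (𝓡.left i))]
  simp only [map_sum, map_smul, Finset.mul_sum, Finset.sum_mul, mul_smul_comm, smul_mul_assoc,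
    Finset.smul_sum, smul_smul]

end

theorem statement14_general (S' : B →ₗ[R] B)
    (hS'₂ : (HopfAlgebra.antipode R : B →ₗ[R] B) ∘ₗ S' = LinearMap.id)
    {V : Type} [AddCommGroup V] [Module R V]
    (act : B →ₗ[R] V →ₗ[R] V) (coact : V →ₗ[R] B ⊗[R] V)
    (hDY : IsDrinfeldYetter S' act coact) :
    -- `g ↦ ε ∘ g` is a bijection between the two sets
    Set.BijOn (fun g : V →ₗ[R] B => (Coalgebra.counit : B →ₗ[R] R) ∘ₗ g)
      {g : V →ₗ[R] B |
        (∀ (b : B) (v : V), g (act b v) = adjActT S' (b ⊗ₜ[R] g v)) ∧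
        (∀ v : V, (TensorProduct.comm R B B).toLinearMap
            (Coalgebra.comul (R := R) (g v)) = LinearMap.lTensor B g (coact v))}
      {f : V →ₗ[R] R | ∀ (b : B) (v : V),
        f (act b v) = Coalgebra.counit (R := R) b * f v} ∧
    -- the inverse sends `f` to `(id ⊗ f) ∘ ρ*`
    (∀ g : V →ₗ[R] B,
      (∀ (b : B) (v : V), g (act b v) = adjActT S' (b ⊗ₜ[R] g v)) →
      (∀ v : V, (TensorProduct.comm R B B).toLinearMap
          (Coalgebra.comul (R := R) (g v)) = LinearMap.lTensor B g (coact v)) →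
      (TensorProduct.rid R B).toLinearMap ∘ₗ
          LinearMap.lTensor B ((Coalgebra.counit : B →ₗ[R] R) ∘ₗ g) ∘ₗ coact = g) ∧
    (∀ f : V →ₗ[R] R,
      (∀ (b : B) (v : V), f (act b v) = Coalgebra.counit (R := R) b * f v) →
      (∀ (b : B) (v : V),
        ((TensorProduct.rid R B).toLinearMap ∘ₗ LinearMap.lTensor B f ∘ₗ coact) (act b v) =
          adjActT S' (b ⊗ₜ[R]
            ((TensorProduct.rid R B).toLinearMap ∘ₗ LinearMap.lTensor B f ∘ₗ coact) v)) ∧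
      (∀ v : V, (TensorProduct.comm R B B).toLinearMap
          (Coalgebra.comul (R := R)
            (((TensorProduct.rid R B).toLinearMap ∘ₗ LinearMap.lTensor B f ∘ₗ coact) v)) =
        LinearMap.lTensor B
          ((TensorProduct.rid R B).toLinearMap ∘ₗ LinearMap.lTensor B f ∘ₗ coact)
          (coact v))) := by
  refine ⟨⟨fun g hg b v => ?_, fun g hg g' hg' hgg' => ?_, fun f hf => ?_⟩,
    fun g _ hg => coactLift_counit_comp coact hg,
    fun f hf => ⟨coactLift_act hDY hf, comm_comul_coactLift hDY.coassoc f⟩⟩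
  · simp [hg.1, counit_adjActT_tmul hS'₂]
  · rw [← coactLift_counit_comp coact hg.2, ← coactLift_counit_comp coact hg'.2]
    exact congrArg (coactLift coact) hgg'
  · exact ⟨coactLift coact f, ⟨coactLift_act hDY hf, comm_comul_coactLift hDY.coassoc f⟩,
      counit_comp_coactLift hDY.counit_coact f⟩

/-- Universal property of `M̂` (which is `B` with the adjoint action
`b ▷ x = Σ b₍₂₎ · x · S⁻¹(b₍₁₎)` and the coaction `(1 2) ∘ Δ`): for every Drinfeld–Yetter
`B`-module `(V, ρ, ρ*)`, the assignment `g ↦ ε ∘ g` is a bijection from the set of linear maps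
`g : V → M̂` that are simultaneously `B`-module and `B`-comodule maps onto the set of linear
maps `f : V → k` with `f(ρ(b ⊗ v)) = ε(b) f(v)`; its inverse sends `f` to `(id ⊗ f) ∘ ρ*`. -/
theorem statement14 (S' : B →ₗ[R] B)
    (hS'₁ : S' ∘ₗ (HopfAlgebra.antipode R : B →ₗ[R] B) = LinearMap.id)
    (hS'₂ : (HopfAlgebra.antipode R : B →ₗ[R] B) ∘ₗ S' = LinearMap.id)
    {V : Type} [AddCommGroup V] [Module R V]
    (act : B →ₗ[R] V →ₗ[R] V) (coact : V →ₗ[R] B ⊗[R] V)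
    (hDY : IsDrinfeldYetter S' act coact) :
    -- `g ↦ ε ∘ g` is a bijection between the two sets
    Set.BijOn (fun g : V →ₗ[R] B => (Coalgebra.counit : B →ₗ[R] R) ∘ₗ g)
      {g : V →ₗ[R] B |
        (∀ (b : B) (v : V), g (act b v) = adjActT S' (b ⊗ₜ[R] g v)) ∧
        (∀ v : V, (TensorProduct.comm R B B).toLinearMap
            (Coalgebra.comul (R := R) (g v)) = LinearMap.lTensor B g (coact v))}
      {f : V →ₗ[R] R | ∀ (b : B) (v : V),
        f (act b v) = Coalgebra.counit (R := R) b * f v} ∧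
    -- the inverse sends `f` to `(id ⊗ f) ∘ ρ*`
    (∀ g : V →ₗ[R] B,
      (∀ (b : B) (v : V), g (act b v) = adjActT S' (b ⊗ₜ[R] g v)) →
      (∀ v : V, (TensorProduct.comm R B B).toLinearMap
          (Coalgebra.comul (R := R) (g v)) = LinearMap.lTensor B g (coact v)) →
      (TensorProduct.rid R B).toLinearMap ∘ₗ
          LinearMap.lTensor B ((Coalgebra.counit : B →ₗ[R] R) ∘ₗ g) ∘ₗ coact = g) ∧
    (∀ f : V →ₗ[R] R,
      (∀ (b : B) (v : V), f (act b v) = Coalgebra.counit (R := R) b * f v) →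
      (∀ (b : B) (v : V),
        ((TensorProduct.rid R B).toLinearMap ∘ₗ LinearMap.lTensor B f ∘ₗ coact) (act b v) =
          adjActT S' (b ⊗ₜ[R]
            ((TensorProduct.rid R B).toLinearMap ∘ₗ LinearMap.lTensor B f ∘ₗ coact) v)) ∧
      (∀ v : V, (TensorProduct.comm R B B).toLinearMap
          (Coalgebra.comul (R := R)
            (((TensorProduct.rid R B).toLinearMap ∘ₗ LinearMap.lTensor B f ∘ₗ coact) v)) =
        LinearMap.lTensor B
          ((TensorProduct.rid R B).toLinearMap ∘ₗ LinearMap.lTensor B f ∘ₗ coact)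
          (coact v))) :=
  statement14_general S' hS'₂ act coact hDY
end
end
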